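/- Under the discretized (Galerkin) piezoelectric setting with strictly positive damping parameters α > 0 and β > 0: let t₀ ≥ 0, let f : ℝ → ℝⁿ be continuous and g : ℝ → ℝᵏ be continuously differentiable with f(t) = 0 and g(t) = 0 for all t ≥ t₀, and let (u, φ) solve the discretized piezoelectric system on [0, ∞) with u twice continuously differentiable and φ continuously differentiable. Then as t → ∞: u'(t) → 0, ⟨K u(t), u(t)⟩ → 0, φ(t) → 0, and the energy η(t) := ‖u'(t)‖² + ‖u(t)‖² + ‖φ(t)‖² converges to some nonnegative real limit c. -/

import Mathlib

/-!
After `t₀` the constraint gives `φ = A⁻¹ Cᵀ u`, so `u` solves the homogeneous damped system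
`M u'' + D u' + S u = 0` with damping `D = α M + β K` and effective stiffness
`S = K + C A⁻¹ Cᵀ`. The energy `E = ⟪M u', u'⟫ + ⟪S u, u⟫` is antitone, and the perturbed energy
`V = E + α ⟪M u', u⟫ + (α / 2) ⟪D u, u⟫` is nonnegative with `V' ≤ -α E`; integrating over
`[t₀, s]` gives `E s ≤ V t₀ / (α (s - t₀)) → 0`. Hence `u' → 0` and `⟪S u, u⟫ → 0`, which splits
into `⟪K u, u⟫ → 0` and `⟪A⁻¹ Cᵀ u, Cᵀ u⟫ → 0`, i.e. `φ → 0`.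

The total energy converges because `u` itself converges: `⟪u, S a⟫ = ⟪S u, a⟫ → 0`, and for
`w ∈ ker S` the quantity `⟪M u' + D u, w⟫` is conserved, so `⟪u, D w⟫` converges; as `D` is
positive definite, `range S + D (ker S)` is the whole space.
-/

open MeasureTheory Matrix Set Filter

/-- The pair `(u, φ)` (with first and second derivatives `u'`, `u''` of `u`) solves the
discretized (Galerkin) piezoelectric system with mass matrix `M`, stiffness matrix `K`,
dielectric matrix `A`, piezoelectric coupling matrix `C`, Rayleigh damping parameters
`α, β` and forcing terms `f, g` on the time set `I`. -/
def PiezoSolves {n k : ℕ} (M K : Matrix (Fin n) (Fin n) ℝ)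
    (A : Matrix (Fin k) (Fin k) ℝ) (C : Matrix (Fin n) (Fin k) ℝ)
    (α β : ℝ) (f : ℝ → Fin n → ℝ) (g : ℝ → Fin k → ℝ)
    (u u' u'' : ℝ → Fin n → ℝ) (φ : ℝ → Fin k → ℝ) (I : Set ℝ) : Prop :=
  (∀ t ∈ I, HasDerivAt u (u' t) t) ∧
  (∀ t ∈ I, HasDerivAt u' (u'' t) t) ∧
  (∀ t ∈ I,
    M.mulVec (u'' t) + α • M.mulVec (u' t) + K.mulVec (u t)
      + β • K.mulVec (u' t) + C.mulVec (φ t) = f t) ∧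
  (∀ t ∈ I, Cᵀ.mulVec (u t) - A.mulVec (φ t) = g t)

open Topology

section

variable {ι : Type*} [Fintype ι] {X : Type*} {l : Filter X}

theorem Matrix.IsHermitian.dotProduct_mulVec_comm {B : Matrix ι ι ℝ} (hB : B.IsHermitian)
    (x y : ι → ℝ) : x ⬝ᵥ B *ᵥ y = y ⬝ᵥ B *ᵥ x := by
  rw [dotProduct_mulVec, ← mulVec_transpose, ← conjTranspose_eq_transpose_of_trivial, hB.eq,
    dotProduct_comm]

theorem Matrix.PosSemidef.dotProduct_mulVec_nonneg' {B : Matrix ι ι ℝ} (hB : B.PosSemidef)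
    (x : ι → ℝ) : 0 ≤ x ⬝ᵥ B *ᵥ x :=
  hB.dotProduct_mulVec_nonneg x

theorem Filter.Tendsto.dotProduct {x y : X → ι → ℝ} {p q : ι → ℝ} (hx : Tendsto x l (𝓝 p))
    (hy : Tendsto y l (𝓝 q)) : Tendsto (fun t => x t ⬝ᵥ y t) l (𝓝 (p ⬝ᵥ q)) :=
  ((continuous_fst.dotProduct continuous_snd).tendsto (p, q)).comp (hx.prodMk_nhds hy)

theorem Filter.Tendsto.matrix_mulVec {κ : Type*} (B : Matrix κ ι ℝ) {x : X → ι → ℝ}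
    {p : ι → ℝ} (hx : Tendsto x l (𝓝 p)) : Tendsto (fun t => B *ᵥ x t) l (𝓝 (B *ᵥ p)) :=
  ((continuous_const.matrix_mulVec continuous_id).tendsto p).comp hx

theorem norm_le_sqrt_dotProduct_self (v : ι → ℝ) : ‖v‖ ≤ √(v ⬝ᵥ v) := by
  refine (pi_norm_le_iff_of_nonneg (Real.sqrt_nonneg _)).2 fun i => ?_
  rw [Real.norm_eq_abs]
  refine Real.abs_le_sqrt ?_
  rw [sq]
  exact Finset.single_le_sum (f := fun j => v j * v j) (fun j _ => mul_self_nonneg (v j))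
    (Finset.mem_univ i)

theorem tendsto_zero_of_tendsto_dotProduct_self {x : X → ι → ℝ}
    (h : Tendsto (fun t => x t ⬝ᵥ x t) l (𝓝 0)) : Tendsto x l (𝓝 0) :=
  squeeze_zero_norm (fun t => norm_le_sqrt_dotProduct_self (x t)) (by simpa using h.sqrt)

open scoped MatrixOrder in
theorem Matrix.PosSemidef.tendsto_mulVec_zero {B : Matrix ι ι ℝ} (hB : B.PosSemidef)
    {x : X → ι → ℝ} (h : Tendsto (fun t => x t ⬝ᵥ B *ᵥ x t) l (𝓝 0)) :
    Tendsto (fun t => B *ᵥ x t) l (𝓝 0) := by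
  classical
  obtain ⟨X, rfl⟩ := CStarAlgebra.nonneg_iff_eq_star_mul_self.mp hB.nonneg
  have hX : Tendsto (fun t => X *ᵥ x t) l (𝓝 0) := by
    refine tendsto_zero_of_tendsto_dotProduct_self (h.congr fun t => ?_)
    rw [← mulVec_mulVec, dotProduct_mulVec, star_eq_conjTranspose, vecMul_conjTranspose]
    simp only [star_trivial]
  simpa [← mulVec_mulVec] using hX.matrix_mulVec (star X)

theorem Matrix.PosDef.tendsto_zero {B : Matrix ι ι ℝ} (hB : B.PosDef)
    {x : X → ι → ℝ} (h : Tendsto (fun t => x t ⬝ᵥ B *ᵥ x t) l (𝓝 0)) : Tendsto x l (𝓝 0) := by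
  classical
  have := (hB.posSemidef.tendsto_mulVec_zero h).matrix_mulVec B⁻¹
  simpa [mulVec_mulVec, nonsing_inv_mul _ ((isUnit_iff_isUnit_det B).1 hB.isUnit)] using this

theorem Matrix.PosSemidef.tendsto_dotProduct_mulVec_zero_of_add {A B : Matrix ι ι ℝ}
    (hA : A.PosSemidef) (hB : B.PosSemidef) {x : X → ι → ℝ}
    (h : Tendsto (fun t => x t ⬝ᵥ (A + B) *ᵥ x t) l (𝓝 0)) :
    Tendsto (fun t => x t ⬝ᵥ A *ᵥ x t) l (𝓝 0) := by
  refine squeeze_zero (fun t => hA.dotProduct_mulVec_nonneg' (x t)) (fun t => ?_) h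
  rw [add_mulVec, dotProduct_add]
  exact le_add_of_nonneg_right (hB.dotProduct_mulVec_nonneg' (x t))

theorem HasDerivAt.matrix_mulVec {κ : Type*} (B : Matrix κ ι ℝ) {x : ℝ → ι → ℝ} {x' : ι → ℝ}
    {t : ℝ} (hx : HasDerivAt x x' t) : HasDerivAt (fun s => B *ᵥ x s) (B *ᵥ x') t := by
  refine hasDerivAt_pi.2 fun i => ?_
  simp only [mulVec, dotProduct]
  exact HasDerivAt.fun_sum fun j _ => (hasDerivAt_pi.1 hx j).const_mul (B i j)

theorem HasDerivAt.dotProduct {x y : ℝ → ι → ℝ} {x' y' : ι → ℝ} {t : ℝ}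
    (hx : HasDerivAt x x' t) (hy : HasDerivAt y y' t) :
    HasDerivAt (fun s => x s ⬝ᵥ y s) (x' ⬝ᵥ y t + x t ⬝ᵥ y') t := by
  simp only [_root_.dotProduct, ← Finset.sum_add_distrib]
  exact HasDerivAt.fun_sum fun i _ => (hasDerivAt_pi.1 hx i).mul (hasDerivAt_pi.1 hy i)

theorem tendsto_zero_of_antitoneOn_of_hasDerivAt_le {f V V' : ℝ → ℝ} {T c : ℝ} (hc : 0 < c)
    (hf : AntitoneOn f (Ici T)) (hf0 : ∀ t ≥ T, 0 ≤ f t) (hV0 : ∀ t ≥ T, 0 ≤ V t)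
    (hV : ∀ t ≥ T, HasDerivAt V (V' t) t) (hV' : ∀ t ≥ T, V' t ≤ -c * f t) :
    Tendsto f atTop (𝓝 0) := by
  have hbound : ∀ s > T, f s ≤ V T / (c * (s - T)) := by
    intro s hs
    have hmvt := (convex_Icc T s).image_sub_le_mul_sub_of_deriv_le (f := V) (C := -c * f s)
      (fun t ht => (hV t ht.1).continuousAt.continuousWithinAt)
      (fun t ht => (hV t (interior_subset ht).1).differentiableAt.differentiableWithinAt)
      (fun t ht => by
        rw [interior_Icc] at ht
        rw [(hV t ht.1.le).deriv]
        exact (hV' t ht.1.le).trans (mul_le_mul_of_nonpos_left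
          (hf (mem_Ici.2 ht.1.le) (mem_Ici.2 hs.le) ht.2.le) (neg_nonpos.2 hc.le)))
      T (left_mem_Icc.2 hs.le) s (right_mem_Icc.2 hs.le) hs.le
    rw [le_div_iff₀ (mul_pos hc (sub_pos.2 hs))]
    linarith [hV0 s hs.le]
  have hlim : Tendsto (fun s => V T / (c * (s - T))) atTop (𝓝 0) :=
    tendsto_const_nhds.div_atTop ((tendsto_atTop_add_const_right _ _ tendsto_id).const_mul_atTop hc)
  refine squeeze_zero' (eventually_ge_atTop T |>.mono hf0) ?_ hlim
  filter_upwards [eventually_gt_atTop T] with s hs using hbound s hs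

theorem Matrix.PosDef.eq_zero_of_dotProduct_mulVec_self {D : Matrix ι ι ℝ} (hD : D.PosDef)
    {w : ι → ℝ} (hw : w ⬝ᵥ D *ᵥ w = 0) : w = 0 := by
  by_contra hne
  simpa [hw] using hD.dotProduct_mulVec_pos hne

theorem Matrix.PosDef.sup_range_map_ker_eq_top [DecidableEq ι] {S D : Matrix ι ι ℝ}
    (hS : S.IsHermitian) (hD : D.PosDef) :
    LinearMap.range S.mulVecLin ⊔ (LinearMap.ker S.mulVecLin).map D.mulVecLin = ⊤ := by
  have hinj : Function.Injective D.mulVecLin := mulVec_injective_of_isUnit hD.isUnit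
  have hinf : LinearMap.range S.mulVecLin ⊓ (LinearMap.ker S.mulVecLin).map D.mulVecLin = ⊥ := by
    rw [Submodule.eq_bot_iff]
    rintro _ ⟨⟨a, rfl⟩, w, hw, hDw⟩
    simp only [mulVecLin_apply, SetLike.mem_coe, LinearMap.mem_ker] at hw hDw ⊢
    have : w = 0 := hD.eq_zero_of_dotProduct_mulVec_self <| by
      rw [hDw, hS.dotProduct_mulVec_comm, hw, dotProduct_zero]
    rw [← hDw, this, mulVec_zero]
  apply Submodule.eq_top_of_finrank_eq
  have hsup := Submodule.finrank_sup_add_finrank_inf_eq (LinearMap.range S.mulVecLin)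
    ((LinearMap.ker S.mulVecLin).map D.mulVecLin)
  have hmap := (Submodule.equivMapOfInjective _ hinj (LinearMap.ker S.mulVecLin)).finrank_eq
  rw [hinf, finrank_bot, ← hmap, S.mulVecLin.finrank_range_add_finrank_ker] at hsup
  simpa using hsup

theorem Matrix.PosDef.exists_tendsto_of_tendsto_mulVec_zero {S D : Matrix ι ι ℝ}
    (hS : S.IsHermitian) (hD : D.PosDef) {x : X → ι → ℝ}
    (hSx : Tendsto (fun t => S *ᵥ x t) l (𝓝 0))
    (hker : ∀ w, S *ᵥ w = 0 → ∃ c, Tendsto (fun t => x t ⬝ᵥ D *ᵥ w) l (𝓝 c)) :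
    ∃ p, Tendsto x l (𝓝 p) := by
  classical
  have hdir : ∀ z, ∃ c, Tendsto (fun t => x t ⬝ᵥ z) l (𝓝 c) := by
    intro z
    have hz : z ∈ LinearMap.range S.mulVecLin ⊔ (LinearMap.ker S.mulVecLin).map D.mulVecLin :=
      hD.sup_range_map_ker_eq_top hS ▸ Submodule.mem_top
    obtain ⟨_, ⟨a, rfl⟩, _, ⟨w, hw, rfl⟩, rfl⟩ := Submodule.mem_sup.1 hz
    obtain ⟨c, hc⟩ := hker w hw
    refine ⟨0 ⬝ᵥ a + c, ?_⟩
    simp only [mulVecLin_apply, dotProduct_add]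
    refine ((hSx.dotProduct tendsto_const_nhds).congr fun t => ?_).add hc
    rw [hS.dotProduct_mulVec_comm, dotProduct_comm]
  choose c hc using fun i => hdir (Pi.single i 1)
  exact ⟨c, tendsto_pi_nhds.2 fun i => by simpa using hc i⟩

structure IsDampedSolution (M D S : Matrix ι ι ℝ) (u u' u'' : ℝ → ι → ℝ) (T : ℝ) : Prop where
  hasDerivAt : ∀ t ≥ T, HasDerivAt u (u' t) t
  hasDerivAt' : ∀ t ≥ T, HasDerivAt u' (u'' t) t
  ode : ∀ t ≥ T, M *ᵥ u'' t + D *ᵥ u' t + S *ᵥ u t = 0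

def dampedEnergy (M S : Matrix ι ι ℝ) (u u' : ℝ → ι → ℝ) (t : ℝ) : ℝ :=
  u' t ⬝ᵥ M *ᵥ u' t + u t ⬝ᵥ S *ᵥ u t

noncomputable def dampedLyapunov (M D S : Matrix ι ι ℝ) (a : ℝ) (u u' : ℝ → ι → ℝ) (t : ℝ) : ℝ :=
  dampedEnergy M S u u' t + a * (u' t ⬝ᵥ M *ᵥ u t) + a / 2 * (u t ⬝ᵥ D *ᵥ u t)

theorem dampedEnergy_nonneg {M S : Matrix ι ι ℝ} (hM : M.PosSemidef) (hS : S.PosSemidef)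
    (u u' : ℝ → ι → ℝ) (t : ℝ) : 0 ≤ dampedEnergy M S u u' t :=
  add_nonneg (hM.dotProduct_mulVec_nonneg' _) (hS.dotProduct_mulVec_nonneg' _)

theorem dampedLyapunov_nonneg {M D S : Matrix ι ι ℝ} {a : ℝ} (hM : M.PosSemidef)
    (hDM : (D - a • M).PosSemidef) (hS : S.PosSemidef) (ha : 0 ≤ a) (u u' : ℝ → ι → ℝ)
    (t : ℝ) : 0 ≤ dampedLyapunov M D S a u u' t := by
  have hw := hM.dotProduct_mulVec_nonneg' (u' t + (a / 2) • u t)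
  have hDMu := hDM.dotProduct_mulVec_nonneg' (u t)
  simp only [mulVec_add, mulVec_smul, sub_mulVec, smul_mulVec, dotProduct_add, add_dotProduct,
    dotProduct_smul, smul_dotProduct, dotProduct_sub, smul_eq_mul] at hw hDMu
  rw [hM.isHermitian.dotProduct_mulVec_comm (u t) (u' t)] at hw
  unfold dampedLyapunov dampedEnergy
  linarith [mul_nonneg ha hDMu, mul_nonneg (sq_nonneg a) (hM.dotProduct_mulVec_nonneg' (u t)),
    hS.dotProduct_mulVec_nonneg' (u t)]

namespace IsDampedSolution

variable {M D S : Matrix ι ι ℝ} {u u' u'' : ℝ → ι → ℝ} {T : ℝ}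

theorem hasDerivAt_dampedEnergy (h : IsDampedSolution M D S u u' u'' T) (hM : M.IsHermitian)
    (hS : S.IsHermitian) {t : ℝ} (ht : t ≥ T) :
    HasDerivAt (dampedEnergy M S u u') (-2 * (u' t ⬝ᵥ D *ᵥ u' t)) t := by
  have hu := h.hasDerivAt t ht
  have hu' := h.hasDerivAt' t ht
  refine ((hu'.dotProduct (hu'.matrix_mulVec M)).add
    (hu.dotProduct (hu.matrix_mulVec S))).congr_deriv ?_
  have hode := congrArg (u' t ⬝ᵥ ·) (h.ode t ht)
  simp only [dotProduct_add, dotProduct_zero] at hode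
  linear_combination 2 * hode + hM.dotProduct_mulVec_comm (u'' t) (u' t)
    + hS.dotProduct_mulVec_comm (u t) (u' t)

theorem hasDerivAt_dampedLyapunov (h : IsDampedSolution M D S u u' u'' T) (hM : M.IsHermitian)
    (hD : D.IsHermitian) (hS : S.IsHermitian) (a : ℝ) {t : ℝ} (ht : t ≥ T) :
    HasDerivAt (dampedLyapunov M D S a u u')
      (-a * dampedEnergy M S u u' t - 2 * (u' t ⬝ᵥ (D - a • M) *ᵥ u' t)) t := by
  have hu := h.hasDerivAt t ht
  have hu' := h.hasDerivAt' t ht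
  refine (((h.hasDerivAt_dampedEnergy hM hS ht).add
    ((hu'.dotProduct (hu.matrix_mulVec M)).const_mul a)).add
    ((hu.dotProduct (hu.matrix_mulVec D)).const_mul (a / 2))).congr_deriv ?_
  have hode := congrArg (u t ⬝ᵥ ·) (h.ode t ht)
  simp only [dotProduct_add, dotProduct_zero] at hode
  simp only [dampedEnergy, sub_mulVec, smul_mulVec, dotProduct_sub, dotProduct_smul, smul_eq_mul]
  linear_combination a * hode + a * hM.dotProduct_mulVec_comm (u'' t) (u t)
    + a / 2 * hD.dotProduct_mulVec_comm (u' t) (u t)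

theorem antitoneOn_dampedEnergy (h : IsDampedSolution M D S u u' u'' T) (hM : M.IsHermitian)
    (hD : D.PosSemidef) (hS : S.IsHermitian) : AntitoneOn (dampedEnergy M S u u') (Ici T) := by
  have hE : ∀ t ∈ Ici T, HasDerivAt (dampedEnergy M S u u') (-2 * (u' t ⬝ᵥ D *ᵥ u' t)) t :=
    fun t ht => h.hasDerivAt_dampedEnergy hM hS ht
  refine antitoneOn_of_hasDerivWithinAt_nonpos (convex_Ici T)
    (fun t ht => (hE t ht).continuousAt.continuousWithinAt)
    (fun t ht => (hE t (interior_subset ht)).hasDerivWithinAt) fun t _ => ?_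
  linarith [hD.dotProduct_mulVec_nonneg' (u' t)]

theorem tendsto_dampedEnergy_zero {a : ℝ} (h : IsDampedSolution M D S u u' u'' T)
    (hM : M.PosSemidef) (hDM : (D - a • M).PosSemidef) (hS : S.PosSemidef) (ha : 0 < a) :
    Tendsto (dampedEnergy M S u u') atTop (𝓝 0) := by
  have hD : D.PosSemidef := by simpa using hDM.add (hM.smul ha.le)
  refine tendsto_zero_of_antitoneOn_of_hasDerivAt_le ha
    (h.antitoneOn_dampedEnergy hM.isHermitian hD hS.isHermitian)
    (fun t _ => dampedEnergy_nonneg hM hS u u' t)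
    (fun t _ => dampedLyapunov_nonneg hM hDM hS ha.le u u' t)
    (fun t ht => h.hasDerivAt_dampedLyapunov hM.isHermitian hD.isHermitian hS.isHermitian a ht)
    fun t _ => ?_
  linarith [hDM.dotProduct_mulVec_nonneg' (u' t)]

theorem tendsto_deriv_zero {a : ℝ} (h : IsDampedSolution M D S u u' u'' T) (hM : M.PosDef)
    (hDM : (D - a • M).PosSemidef) (hS : S.PosSemidef) (ha : 0 < a) :
    Tendsto u' atTop (𝓝 0) :=
  hM.tendsto_zero <| squeeze_zero (fun t => hM.posSemidef.dotProduct_mulVec_nonneg' (u' t))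
    (fun t => le_add_of_nonneg_right (hS.dotProduct_mulVec_nonneg' (u t)))
    (h.tendsto_dampedEnergy_zero hM.posSemidef hDM hS ha)

theorem tendsto_dotProduct_mulVec_zero {a : ℝ} (h : IsDampedSolution M D S u u' u'' T)
    (hM : M.PosSemidef) (hDM : (D - a • M).PosSemidef) (hS : S.PosSemidef) (ha : 0 < a) :
    Tendsto (fun t => u t ⬝ᵥ S *ᵥ u t) atTop (𝓝 0) :=
  squeeze_zero (fun t => hS.dotProduct_mulVec_nonneg' (u t))
    (fun t => le_add_of_nonneg_left (hM.dotProduct_mulVec_nonneg' (u' t)))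
    (h.tendsto_dampedEnergy_zero hM hDM hS ha)

theorem exists_tendsto {a : ℝ} (h : IsDampedSolution M D S u u' u'' T) (hM : M.PosDef)
    (hDM : (D - a • M).PosSemidef) (hS : S.PosSemidef) (ha : 0 < a) :
    ∃ p, Tendsto u atTop (𝓝 p) := by
  have hD : D.PosDef := by simpa using Matrix.PosDef.posSemidef_add hDM (hM.smul ha)
  refine hD.exists_tendsto_of_tendsto_mulVec_zero hS.isHermitian
    (hS.tendsto_mulVec_zero (h.tendsto_dotProduct_mulVec_zero hM.posSemidef hDM hS ha))
    fun w hw => ?_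
  set F : ℝ → ℝ := fun t => u' t ⬝ᵥ M *ᵥ w + u t ⬝ᵥ D *ᵥ w
  have hF : ∀ t ≥ T, HasDerivAt F 0 t := by
    intro t ht
    refine (((h.hasDerivAt' t ht).dotProduct (hasDerivAt_const t (M *ᵥ w))).add
      ((h.hasDerivAt t ht).dotProduct (hasDerivAt_const t (D *ᵥ w)))).congr_deriv ?_
    have hode := congrArg (w ⬝ᵥ ·) (h.ode t ht)
    have hSw : w ⬝ᵥ S *ᵥ u t = 0 := by
      rw [hS.isHermitian.dotProduct_mulVec_comm, hw, dotProduct_zero]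
    simp only [dotProduct_add, dotProduct_zero] at hode ⊢
    linear_combination hode - hSw + hM.isHermitian.dotProduct_mulVec_comm (u'' t) w
      + hD.isHermitian.dotProduct_mulVec_comm (u' t) w
  have hconst : ∀ t ≥ T, F t = F T := fun t ht =>
    constant_of_has_deriv_right_zero (fun s hs => (hF s hs.1).continuousAt.continuousWithinAt)
      (fun s hs => (hF s hs.1).hasDerivWithinAt) t ⟨ht, le_rfl⟩
  refine ⟨F T, ?_⟩
  have hlim := tendsto_const_nhds (x := F T) |>.sub
    ((h.tendsto_deriv_zero hM hDM hS ha).dotProduct (tendsto_const_nhds (x := M *ᵥ w)))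
  rw [zero_dotProduct, sub_zero] at hlim
  refine hlim.congr' ?_
  filter_upwards [eventually_ge_atTop T] with t ht
  rw [← hconst t ht]
  ring

end IsDampedSolution

end

theorem PiezoSolves.potential_eq {n k : ℕ} {M K : Matrix (Fin n) (Fin n) ℝ}
    {A : Matrix (Fin k) (Fin k) ℝ} {C : Matrix (Fin n) (Fin k) ℝ} {α β : ℝ}
    {f : ℝ → Fin n → ℝ} {g : ℝ → Fin k → ℝ} {u u' u'' : ℝ → Fin n → ℝ} {φ : ℝ → Fin k → ℝ}
    {I : Set ℝ} (hsol : PiezoSolves M K A C α β f g u u' u'' φ I) (hA : A.PosDef) {t : ℝ}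
    (ht : t ∈ I) (hgt : g t = 0) : φ t = A⁻¹ *ᵥ Cᵀ *ᵥ u t := by
  have hAφ : A *ᵥ φ t = Cᵀ *ᵥ u t := (sub_eq_zero.1 ((hsol.2.2.2 t ht).trans hgt)).symm
  rw [← hAφ, mulVec_mulVec, nonsing_inv_mul _ ((isUnit_iff_isUnit_det A).1 hA.isUnit),
    one_mulVec]

theorem PiezoSolves.isDampedSolution {n k : ℕ} {M K : Matrix (Fin n) (Fin n) ℝ}
    {A : Matrix (Fin k) (Fin k) ℝ} {C : Matrix (Fin n) (Fin k) ℝ} {α β : ℝ}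
    {f : ℝ → Fin n → ℝ} {g : ℝ → Fin k → ℝ} {u u' u'' : ℝ → Fin n → ℝ} {φ : ℝ → Fin k → ℝ}
    (hsol : PiezoSolves M K A C α β f g u u' u'' φ (Ici 0)) (hA : A.PosDef) {t₀ : ℝ}
    (ht₀ : 0 ≤ t₀) (hf0 : ∀ t ≥ t₀, f t = 0) (hg0 : ∀ t ≥ t₀, g t = 0) :
    IsDampedSolution M (α • M + β • K) (K + C * A⁻¹ * Cᵀ) u u' u'' t₀ where
  hasDerivAt t ht := hsol.1 t (ht₀.trans ht)
  hasDerivAt' t ht := hsol.2.1 t (ht₀.trans ht)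
  ode t ht := by
    have h := hsol.2.2.1 t (ht₀.trans ht)
    rw [hf0 t ht, hsol.potential_eq hA (ht₀.trans ht) (hg0 t ht)] at h
    rw [← h]
    simp only [add_mulVec, smul_mulVec, ← mulVec_mulVec]
    abel

theorem piezo_discrete_long_term_behavior_general {n k : ℕ}
    (M K : Matrix (Fin n) (Fin n) ℝ) (A : Matrix (Fin k) (Fin k) ℝ)
    (C : Matrix (Fin n) (Fin k) ℝ) (α β : ℝ)
    (hM : M.PosDef) (hK : K.PosSemidef) (hA : A.PosDef)
    (hα : 0 < α) (hβ : 0 < β)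
    (t₀ : ℝ) (ht₀ : 0 ≤ t₀)
    (f : ℝ → Fin n → ℝ)
    (g : ℝ → Fin k → ℝ)
    (hf0 : ∀ t ≥ t₀, f t = 0) (hg0 : ∀ t ≥ t₀, g t = 0)
    (u u' u'' : ℝ → Fin n → ℝ) (φ : ℝ → Fin k → ℝ)
    (hsol : PiezoSolves M K A C α β f g u u' u'' φ (Ici 0)) :
    Tendsto u' atTop (nhds 0) ∧
    Tendsto (fun t => K.mulVec (u t) ⬝ᵥ u t) atTop (nhds 0) ∧
    Tendsto φ atTop (nhds 0) ∧
    ∃ c : ℝ, 0 ≤ c ∧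
      Tendsto (fun t => u' t ⬝ᵥ u' t + u t ⬝ᵥ u t + φ t ⬝ᵥ φ t) atTop (nhds c) := by
  have hsys := hsol.isDampedSolution hA ht₀ hf0 hg0
  have hDM : (α • M + β • K - α • M).PosSemidef := by simpa using hK.smul hβ.le
  have hCAC : (C * A⁻¹ * Cᵀ).PosSemidef := by
    simpa using hA.inv.posSemidef.mul_mul_conjTranspose_same C
  have hS := hK.add hCAC
  have hSu := hsys.tendsto_dotProduct_mulVec_zero hM.posSemidef hDM hS hα
  have hu' := hsys.tendsto_deriv_zero hM hDM hS hα
  obtain ⟨p, hp⟩ := hsys.exists_tendsto hM hDM hS hα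
  have hφ : Tendsto φ atTop (nhds 0) := by
    have hCu : Tendsto (fun t => Cᵀ *ᵥ u t ⬝ᵥ A⁻¹ *ᵥ Cᵀ *ᵥ u t) atTop (nhds 0) := by
      refine (hCAC.tendsto_dotProduct_mulVec_zero_of_add hK (by rwa [add_comm] at hSu)).congr
        fun t => ?_
      rw [← mulVec_mulVec, ← mulVec_mulVec, dotProduct_mulVec, ← mulVec_transpose]
    refine (hA.inv.posSemidef.tendsto_mulVec_zero hCu).congr' ?_
    filter_upwards [eventually_ge_atTop t₀] with t ht
    exact (hsol.potential_eq hA (ht₀.trans ht) (hg0 t ht)).symm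
  refine ⟨hu', ?_, hφ, p ⬝ᵥ p, dotProduct_self_star_nonneg p, ?_⟩
  · simpa only [dotProduct_comm] using hK.tendsto_dotProduct_mulVec_zero_of_add hCAC hSu
  · simpa using ((hu'.dotProduct hu').add (hp.dotProduct hp)).add (hφ.dotProduct hφ)

/-- Long-term behavior Corollary at the Galerkin level: with strictly positive damping
and vanishing excitation after time `t₀`, the velocity, the elastic strain energy and the
electric potential tend to zero, and the total energy converges to some `c ≥ 0`. -/
theorem piezo_discrete_long_term_behavior {n k : ℕ}
    (M K : Matrix (Fin n) (Fin n) ℝ) (A : Matrix (Fin k) (Fin k) ℝ)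
    (C : Matrix (Fin n) (Fin k) ℝ) (α β : ℝ)
    (hM : M.PosDef) (hK : K.PosSemidef) (hA : A.PosDef)
    (hα : 0 < α) (hβ : 0 < β)
    (t₀ : ℝ) (ht₀ : 0 ≤ t₀)
    (f : ℝ → Fin n → ℝ) (hf : Continuous f)
    (g g' : ℝ → Fin k → ℝ) (hg : ∀ t, HasDerivAt g (g' t) t) (hg' : Continuous g')
    (hf0 : ∀ t ≥ t₀, f t = 0) (hg0 : ∀ t ≥ t₀, g t = 0)
    (u u' u'' : ℝ → Fin n → ℝ) (φ φ' : ℝ → Fin k → ℝ)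
    (hsol : PiezoSolves M K A C α β f g u u' u'' φ (Ici 0))
    (hu'' : ContinuousOn u'' (Ici 0))
    (hφ : ∀ t ∈ Ici (0 : ℝ), HasDerivAt φ (φ' t) t)
    (hφ' : ContinuousOn φ' (Ici 0)) :
    Tendsto u' atTop (nhds 0) ∧
    Tendsto (fun t => K.mulVec (u t) ⬝ᵥ u t) atTop (nhds 0) ∧
    Tendsto φ atTop (nhds 0) ∧
    ∃ c : ℝ, 0 ≤ c ∧
      Tendsto (fun t => u' t ⬝ᵥ u' t + u t ⬝ᵥ u t + φ t ⬝ᵥ φ t) atTop (nhds c) :=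
  piezo_discrete_long_term_behavior_general M K A C α β hM hK hA hα hβ t₀ ht₀ f g hf0 hg0 u u' u'' φ
    hsol
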